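/- Fix integers w ≥ 2 and d ≥ 2, and let R_w and R_d be the (w−1) × w and (d−1) × d repetition check matrices over 𝔽₂. Form the hypergraph product check matrices H_X = [R_w ⊗ I_d | I_{w−1} ⊗ R_dᵀ] and H_Z = [I_w ⊗ R_d | R_wᵀ ⊗ I_{d−1}]. Then the resulting CSS code is the (w × d) surface code with parameters [[wd + (w−1)(d−1), 1, min(w,d)]]: its number of physical qubits is wd + (w−1)(d−1), its number of logical qubits (wd + (w−1)(d−1)) − rank(H_X) − rank(H_Z) equals 1, and its CSS code distance min(d_X, d_Z) equals min(w, d). -/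

import Mathlib

open Matrix
open scoped Kronecker

/-- The X-type check matrix of the hypergraph product code:
`H_X = [H1 ⊗ I_{n2} | I_{r1} ⊗ H2ᵀ]`. -/
def hgpX {R1 N1 R2 N2 : Type*} [DecidableEq R1] [DecidableEq N2]
    (H1 : Matrix R1 N1 (ZMod 2)) (H2 : Matrix R2 N2 (ZMod 2)) :
    Matrix (R1 × N2) ((N1 × N2) ⊕ (R1 × R2)) (ZMod 2) :=
  Matrix.fromCols (H1 ⊗ₖ (1 : Matrix N2 N2 (ZMod 2)))
    ((1 : Matrix R1 R1 (ZMod 2)) ⊗ₖ H2ᵀ)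

/-- The Z-type check matrix of the hypergraph product code:
`H_Z = [I_{n1} ⊗ H2 | H1ᵀ ⊗ I_{r2}]`. -/
def hgpZ {R1 N1 R2 N2 : Type*} [DecidableEq N1] [DecidableEq R2]
    (H1 : Matrix R1 N1 (ZMod 2)) (H2 : Matrix R2 N2 (ZMod 2)) :
    Matrix (N1 × R2) ((N1 × N2) ⊕ (R1 × R2)) (ZMod 2) :=
  Matrix.fromCols ((1 : Matrix N1 N1 (ZMod 2)) ⊗ₖ H2)
    (H1ᵀ ⊗ₖ (1 : Matrix R2 R2 (ZMod 2)))

/-- The Hamming weight of a vector over 𝔽₂: its number of nonzero entries. -/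
def wt {ι : Type*} [Fintype ι] (v : ι → ZMod 2) : ℕ :=
  (Finset.univ.filter fun i => v i ≠ 0).card

/-- The (d−1) × d check matrix of the [d,1,d] repetition code over 𝔽₂:
its `i`-th row is `e_i + e_{i+1}`. -/
def repMat (d : ℕ) : Matrix (Fin (d - 1)) (Fin d) (ZMod 2) :=
  Matrix.of fun i j => if (j : ℕ) = (i : ℕ) ∨ (j : ℕ) = (i : ℕ) + 1 then 1 else 0

/-!
`R_w` and `R_d` have full row rank, hence so do `H_X` and `H_Z`, and rank–nullity leaves one
logical qubit. For `v ∈ ker H_X` the parities of the `w` rows of its `w × d` block are all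
equal: the rows of `R_d` have even weight and `ker R_w` consists of the constants. This common
parity vanishes on the rowspace of `H_Z`, which by the dimension count is exactly the set of
`v ∈ ker H_X` of even parity; so a nontrivial Z-logical meets every row and has weight at least
`w`, attained by a single column. Transposing the lattice exchanges `H_X` with `H_Z` and `w`
with `d`, which gives `d_X = d`.
-/

open Finset

section LinearAlgebra

theorem eq_inf_ker_of_finrank_eq_succ {K V : Type*} [DivisionRing K] [AddCommGroup V]
    [Module K V] [FiniteDimensional K V] {R S : Submodule K V} {φ : V →ₗ[K] K}
    (hRS : R ≤ S) (hRφ : R ≤ LinearMap.ker φ) (hSφ : ¬ S ≤ LinearMap.ker φ)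
    (h : Module.finrank K S = Module.finrank K R + 1) : R = S ⊓ LinearMap.ker φ := by
  have hlt : Module.finrank K ↥(S ⊓ LinearMap.ker φ) < Module.finrank K S :=
    Submodule.finrank_lt_finrank_of_lt (inf_le_left.lt_of_ne fun hS => hSφ (hS ▸ inf_le_right))
  exact Submodule.eq_of_le_of_finrank_le (le_inf hRS hRφ) (by omega)

theorem range_vecMulLinear_le_ker_mulVecLin {m n k R : Type*} [Fintype n] [Fintype k]
    [CommSemiring R] {A : Matrix m n R} {B : Matrix k n R} (h : A * Bᵀ = 0) :
    LinearMap.range B.vecMulLinear ≤ LinearMap.ker A.mulVecLin := by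
  rintro _ ⟨y, rfl⟩
  simp [← mulVec_transpose, mulVec_mulVec, h]

theorem finrank_range_vecMulLinear {m n K : Type*} [Fintype m] [Fintype n] [Field K]
    (A : Matrix m n K) :
    Module.finrank K (LinearMap.range A.vecMulLinear) = A.rank := by
  rw [rank_eq_finrank_span_row, range_vecMulLinear]

theorem rank_eq_card_of_surjective {m n K : Type*} [Fintype m] [Fintype n] [Field K]
    (A : Matrix m n K) (h : Function.Surjective A.mulVec) : A.rank = Fintype.card m := by
  rw [rank, LinearMap.range_eq_top.mpr h, finrank_top, Module.finrank_fintype_fun_eq_card]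

end LinearAlgebra

section Weight

variable {ι : Type*} [Fintype ι]

theorem card_le_wt_of_injective {α : Type*} [Fintype α] {v : ι → ZMod 2} (f : α → ι)
    (hf : Function.Injective f) (hv : ∀ a, v (f a) ≠ 0) : Fintype.card α ≤ wt v := by
  rw [wt, ← Fintype.card_subtype]
  exact Fintype.card_le_of_injective (fun a => ⟨f a, hv a⟩) fun a b hab =>
    hf (congrArg Subtype.val hab)

theorem wt_comp_equiv {κ : Type*} [Fintype κ] (e : κ ≃ ι) (v : ι → ZMod 2) :
    wt (v ∘ e) = wt v := by
  simp only [wt, ← Fintype.card_subtype, Function.comp_apply]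
  exact Fintype.card_congr (e.subtypeEquiv fun _ => Iff.rfl)

theorem wt_one : wt (1 : ι → ZMod 2) = Fintype.card ι := by
  simp [wt]

theorem wt_single [DecidableEq ι] (i : ι) : wt (Pi.single i (1 : ZMod 2)) = 1 := by
  simp [wt, Pi.single_apply, filter_eq']

end Weight

section HypergraphProduct

variable {R1 N1 R2 N2 : Type*} (H1 : Matrix R1 N1 (ZMod 2)) (H2 : Matrix R2 N2 (ZMod 2))

theorem hgpZ_eq_submatrix_hgpX [DecidableEq N1] [DecidableEq R2] :
    hgpZ H1 H2 = (hgpX H2 H1).submatrix (Equiv.prodComm _ _)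
      (Equiv.sumCongr (Equiv.prodComm _ _) (Equiv.prodComm _ _)) := by
  ext ⟨_, _⟩ (⟨_, _⟩ | ⟨_, _⟩) <;> simp [hgpX, hgpZ, one_apply]

theorem hgpX_eq_submatrix_hgpZ [DecidableEq R1] [DecidableEq N2] :
    hgpX H1 H2 = (hgpZ H2 H1).submatrix (Equiv.prodComm _ _)
      (Equiv.sumCongr (Equiv.prodComm _ _) (Equiv.prodComm _ _)) := by
  ext ⟨_, _⟩ (⟨_, _⟩ | ⟨_, _⟩) <;> simp [hgpX, hgpZ, one_apply]

theorem hgpX_mul_hgpZ_transpose [Fintype R1] [Fintype N1] [Fintype R2] [Fintype N2]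
    [DecidableEq R1] [DecidableEq N1] [DecidableEq R2] [DecidableEq N2] :
    hgpX H1 H2 * (hgpZ H1 H2)ᵀ = 0 := by
  rw [hgpX, hgpZ, transpose_fromCols, fromCols_mul_fromRows, ← kroneckerMap_transpose,
    ← kroneckerMap_transpose, transpose_one, transpose_transpose, transpose_one,
    ← mul_kronecker_mul, ← mul_kronecker_mul, Matrix.mul_one, Matrix.one_mul, Matrix.one_mul,
    Matrix.mul_one]
  ext
  exact CharTwo.add_self_eq_zero _

theorem hgpX_mulVec_apply [Fintype R1] [Fintype N1] [Fintype R2] [Fintype N2]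
    [DecidableEq R1] [DecidableEq N2] (v : (N1 × N2) ⊕ (R1 × R2) → ZMod 2) (r1 : R1)
    (n2 : N2) :
    (hgpX H1 H2 *ᵥ v) (r1, n2) =
      (H1 *ᵥ fun n1 => v (.inl (n1, n2))) r1 + ((fun r2 => v (.inr (r1, r2))) ᵥ* H2) n2 := by
  simp [hgpX, mulVec, vecMul, dotProduct, Fintype.sum_sum_type, Fintype.sum_prod_type,
    one_apply, mul_comm]

theorem vecMul_hgpZ_inl [Fintype N1] [Fintype R2] [DecidableEq N1] [DecidableEq R2]
    (y : N1 × R2 → ZMod 2) (n1 : N1) (n2 : N2) :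
    (y ᵥ* hgpZ H1 H2) (.inl (n1, n2)) = ((fun r2 => y (n1, r2)) ᵥ* H2) n2 := by
  simp [hgpZ, vecMul, dotProduct, Fintype.sum_prod_type, one_apply]

theorem rank_hgpX_of_surjective [Fintype R1] [Fintype N1] [Fintype R2] [Fintype N2]
    [DecidableEq R1] [DecidableEq N2] (h : Function.Surjective H1.mulVec) :
    (hgpX H1 H2).rank = Fintype.card R1 * Fintype.card N2 := by
  rw [rank_eq_card_of_surjective _ fun t => ?_, Fintype.card_prod]
  choose g hg using fun n2 => h fun r1 => t (r1, n2)
  refine ⟨Sum.elim (fun p => g p.2 p.1) 0, funext fun ⟨r1, n2⟩ => ?_⟩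
  simp [hgpX_mulVec_apply, hg, ← Pi.zero_def]

theorem rank_hgpZ_of_surjective [Fintype R1] [Fintype N1] [Fintype R2] [Fintype N2]
    [DecidableEq N1] [DecidableEq R2] (h : Function.Surjective H2.mulVec) :
    (hgpZ H1 H2).rank = Fintype.card N1 * Fintype.card R2 := by
  rw [hgpZ_eq_submatrix_hgpX, rank_submatrix, rank_hgpX_of_surjective _ _ h, mul_comm]

end HypergraphProduct

section Logical

variable {R1 N1 R2 N2 : Type*} [Fintype N2]

def leftContract (c : N2 → ZMod 2) :
    ((N1 × N2) ⊕ (R1 × R2) → ZMod 2) →ₗ[ZMod 2] N1 → ZMod 2 where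
  toFun v n1 := ∑ n2, c n2 * v (.inl (n1, n2))
  map_add' u v := by ext; simp [mul_add, sum_add_distrib]
  map_smul' a v := by ext; simp [mul_sum, mul_left_comm]

theorem leftContract_apply (c : N2 → ZMod 2) (v : (N1 × N2) ⊕ (R1 × R2) → ZMod 2)
    (n1 : N1) :
    leftContract c v n1 = ∑ n2, c n2 * v (.inl (n1, n2)) :=
  rfl

def leftTensor (x : N1 → ZMod 2) (y : N2 → ZMod 2) : (N1 × N2) ⊕ (R1 × R2) → ZMod 2 :=
  Sum.elim (fun p => x p.1 * y p.2) 0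

theorem leftContract_leftTensor (c y : N2 → ZMod 2) (x : N1 → ZMod 2) :
    leftContract c (leftTensor x y : (N1 × N2) ⊕ (R1 × R2) → ZMod 2) =
      (c ⬝ᵥ y) • x := by
  ext n1
  simp only [leftContract_apply, leftTensor, Sum.elim_inl, dotProduct, Pi.smul_apply, smul_eq_mul,
    sum_mul]
  exact sum_congr rfl fun _ _ => by ring

theorem wt_leftTensor [Fintype R1] [Fintype N1] [Fintype R2] (x : N1 → ZMod 2)
    (y : N2 → ZMod 2) :
    wt (leftTensor x y : (N1 × N2) ⊕ (R1 × R2) → ZMod 2) = wt x * wt y := by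
  simp only [wt, card_filter]
  simp only [Fintype.sum_sum_type, leftTensor, Sum.elim_inl, Sum.elim_inr, Pi.zero_apply,
    ne_eq, not_true_eq_false, if_false, sum_const_zero, add_zero, Fintype.sum_prod_type,
    mul_eq_zero, not_or, sum_mul_sum, ite_zero_mul_ite_zero, mul_one]

variable (H1 : Matrix R1 N1 (ZMod 2)) (H2 : Matrix R2 N2 (ZMod 2))

theorem mulVec_leftContract_eq_zero [Fintype R1] [Fintype N1] [Fintype R2] [DecidableEq R1]
    [DecidableEq N2] {c : N2 → ZMod 2} (hc : H2 *ᵥ c = 0)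
    {v : (N1 × N2) ⊕ (R1 × R2) → ZMod 2} (hv : hgpX H1 H2 *ᵥ v = 0) :
    H1 *ᵥ leftContract c v = 0 := by
  funext r1
  have hrow (n2 : N2) : (H1 *ᵥ fun n1 => v (.inl (n1, n2))) r1 =
      ((fun r2 => v (.inr (r1, r2))) ᵥ* H2) n2 := by
    rw [← CharTwo.add_eq_zero, ← hgpX_mulVec_apply, hv, Pi.zero_apply]
  calc (H1 *ᵥ leftContract c v) r1 = ∑ n2, c n2 * (H1 *ᵥ fun n1 => v (.inl (n1, n2))) r1 := by
        simp only [mulVec, dotProduct, leftContract_apply, mul_sum]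
        rw [sum_comm]
        simp only [mul_left_comm]
    _ = c ⬝ᵥ ((fun r2 => v (.inr (r1, r2))) ᵥ* H2) := by simp only [hrow, dotProduct]
    _ = 0 := by rw [dotProduct_comm, ← dotProduct_mulVec, hc, dotProduct_zero]

theorem leftContract_vecMul_hgpZ [Fintype N1] [Fintype R2] [DecidableEq N1] [DecidableEq R2]
    {c : N2 → ZMod 2} (hc : H2 *ᵥ c = 0) (y : N1 × R2 → ZMod 2) :
    leftContract c (y ᵥ* hgpZ H1 H2) = 0 := by
  funext n1
  calc leftContract c (y ᵥ* hgpZ H1 H2) n1 = c ⬝ᵥ ((fun r2 => y (n1, r2)) ᵥ* H2) := by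
        simp only [leftContract_apply, vecMul_hgpZ_inl, dotProduct]
    _ = 0 := by rw [dotProduct_comm, ← dotProduct_mulVec, hc, dotProduct_zero]

theorem hgpX_mulVec_leftTensor [Fintype R1] [Fintype N1] [Fintype R2] [DecidableEq R1]
    [DecidableEq N2] {x : N1 → ZMod 2} (hx : H1 *ᵥ x = 0) (y : N2 → ZMod 2) :
    hgpX H1 H2 *ᵥ leftTensor x y = 0 := by
  funext ⟨r1, n2⟩
  have hcol : (fun n1 => x n1 * y n2) = y n2 • x := by ext; simp [mul_comm]
  simp [hgpX_mulVec_apply, leftTensor, hcol, mulVec_smul, hx, ← Pi.zero_def]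

end Logical

section LogicalWeights

variable {m k n m' k' n' : Type*} [Fintype k] [Fintype n] [Fintype k'] [Fintype n']

-- `sInf (logicalWeights H_X H_Z)` is `d_Z` and `sInf (logicalWeights H_Z H_X)` is `d_X`.
def logicalWeights (A : Matrix m n (ZMod 2)) (B : Matrix k n (ZMod 2)) : Set ℕ :=
  {w | ∃ v, A *ᵥ v = 0 ∧ v ∉ LinearMap.range B.vecMulLinear ∧ wt v = w}

theorem logicalWeights_submatrix (A : Matrix m n (ZMod 2)) (B : Matrix k n (ZMod 2))
    (em : m' ≃ m) (ek : k' ≃ k) (en : n' ≃ n) :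
    logicalWeights (A.submatrix em en) (B.submatrix ek en) = logicalWeights A B := by
  have hmulVec (u : n → ZMod 2) : A.submatrix em en *ᵥ (u ∘ en) = 0 ↔ A *ᵥ u = 0 := by
    rw [submatrix_mulVec_equiv, Function.comp_assoc, en.self_comp_symm, Function.comp_id]
    exact em.surjective.injective_comp_right.eq_iff' rfl
  have hrange (u : n → ZMod 2) : u ∘ en ∈ LinearMap.range (B.submatrix ek en).vecMulLinear ↔
      u ∈ LinearMap.range B.vecMulLinear := by
    simp only [LinearMap.mem_range, vecMulLinear_apply, submatrix_vecMul_equiv,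
      en.surjective.injective_comp_right.eq_iff]
    refine ⟨fun ⟨y, hy⟩ => ⟨_, hy⟩, fun ⟨x, hx⟩ => ⟨x ∘ ek, ?_⟩⟩
    rwa [Function.comp_assoc, ek.self_comp_symm, Function.comp_id]
  ext w
  refine (en.arrowCongr (Equiv.refl _)).exists_congr_left.trans (exists_congr fun u => ?_)
  exact and_congr (hmulVec u)
    (and_congr (not_congr (hrange u)) (by rw [← wt_comp_equiv en u]; rfl))

end LogicalWeights

section RepetitionCode

variable {d : ℕ}

theorem repMat_mulVec_apply (g : Fin d → ZMod 2) (i : Fin (d - 1)) :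
    (repMat d *ᵥ g) i = g ⟨i, by omega⟩ + g ⟨i + 1, by omega⟩ := by
  have hrow (j : Fin d) : repMat d i j =
      (if ⟨i, by omega⟩ = j then 1 else 0) + (if ⟨i + 1, by omega⟩ = j then 1 else 0) := by
    simp only [repMat, of_apply, Fin.ext_iff]
    split_ifs <;> first | omega | simp
  simp [mulVec, dotProduct, hrow, add_mul, sum_add_distrib]

theorem repMat_mulVec_one : repMat d *ᵥ 1 = 0 := by
  funext i
  simp [repMat_mulVec_apply, CharTwo.add_self_eq_zero]

theorem apply_eq_apply_zero_of_repMat_mulVec_eq_zero {g : Fin d → ZMod 2}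
    (h : repMat d *ᵥ g = 0) (j : Fin d) : g j = g ⟨0, j.pos⟩ := by
  obtain ⟨n, hn⟩ := j
  induction n with
  | zero => rfl
  | succ n ih =>
    rw [← ih (by omega), eq_comm, ← CharTwo.add_eq_zero]
    simpa [repMat_mulVec_apply] using congrFun h ⟨n, by omega⟩

theorem repMat_mulVec_surjective : Function.Surjective (repMat d).mulVec := by
  intro t
  -- suffix sums of `t`: consecutive ones differ exactly by one entry of `t`
  refine ⟨fun j => ∑ i : Fin (d - 1), if (j : ℕ) ≤ i then t i else 0, funext fun i => ?_⟩
  rw [repMat_mulVec_apply, ← sum_add_distrib]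
  calc _ = ∑ i' : Fin (d - 1), if i = i' then t i' else 0 := sum_congr rfl fun i' _ => ?_
    _ = t i := by simp
  rcases lt_trichotomy (i : ℕ) i' with h | h | h
  · simp [show (i : ℕ) ≤ i' by omega, show (i : ℕ) + 1 ≤ i' by omega, Fin.ne_of_lt h,
      CharTwo.add_self_eq_zero]
  · simp [Fin.ext h]
  · simp [show ¬(i : ℕ) ≤ i' by omega, show ¬(i : ℕ) + 1 ≤ i' by omega,
      (Fin.ne_of_lt h).symm]

end RepetitionCode

section SurfaceCode

variable {w d : ℕ}

theorem mul_add_pred_mul_pred (hw : 0 < w) (hd : 0 < d) :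
    w * d + (w - 1) * (d - 1) = (w - 1) * d + w * (d - 1) + 1 := by
  obtain ⟨w, rfl⟩ := Nat.exists_eq_add_of_lt hw
  obtain ⟨d, rfl⟩ := Nat.exists_eq_add_of_lt hd
  simp only [Nat.zero_add, Nat.add_sub_cancel]
  ring

theorem rank_hgpX_repMat : (hgpX (repMat w) (repMat d)).rank = (w - 1) * d := by
  simp [rank_hgpX_of_surjective _ _ repMat_mulVec_surjective]

theorem rank_hgpZ_repMat : (hgpZ (repMat w) (repMat d)).rank = w * (d - 1) := by
  simp [rank_hgpZ_of_surjective _ _ repMat_mulVec_surjective]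

theorem finrank_ker_hgpX_repMat (hw : 0 < w) (hd : 0 < d) :
    Module.finrank (ZMod 2) (LinearMap.ker (hgpX (repMat w) (repMat d)).mulVecLin) =
      w * (d - 1) + 1 := by
  have h := LinearMap.finrank_range_add_finrank_ker (hgpX (repMat w) (repMat d)).mulVecLin
  rw [← rank, rank_hgpX_repMat, Module.finrank_fintype_fun_eq_card] at h
  simp only [Fintype.card_sum, Fintype.card_prod, Fintype.card_fin,
    mul_add_pred_mul_pred hw hd] at h
  omega

theorem leftContract_one_leftTensor_single (hd : 0 < d) :
    leftContract 1 (leftTensor 1 (Pi.single ⟨0, hd⟩ 1) :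
      (Fin w × Fin d) ⊕ (Fin (w - 1) × Fin (d - 1)) → ZMod 2) = 1 := by
  simp [leftContract_leftTensor]

theorem range_vecMulLinear_hgpZ_repMat (hw : 0 < w) (hd : 0 < d) :
    LinearMap.range (hgpZ (repMat w) (repMat d)).vecMulLinear =
      LinearMap.ker (hgpX (repMat w) (repMat d)).mulVecLin ⊓
        LinearMap.ker (LinearMap.proj ⟨0, hw⟩ ∘ₗ leftContract 1) := by
  refine eq_inf_ker_of_finrank_eq_succ
    (range_vecMulLinear_le_ker_mulVecLin (hgpX_mul_hgpZ_transpose _ _)) ?_ ?_ ?_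
  · rintro _ ⟨y, rfl⟩
    simp [leftContract_vecMul_hgpZ _ _ repMat_mulVec_one]
  · intro hle
    simpa [leftContract_one_leftTensor_single] using
      hle (hgpX_mulVec_leftTensor _ (repMat d) repMat_mulVec_one (Pi.single ⟨0, hd⟩ 1))
  · rw [finrank_ker_hgpX_repMat hw hd, finrank_range_vecMulLinear, rank_hgpZ_repMat]

theorem le_wt_of_mulVec_hgpX_repMat_eq_zero (hw : 0 < w) (hd : 0 < d)
    {v : (Fin w × Fin d) ⊕ (Fin (w - 1) × Fin (d - 1)) → ZMod 2}
    (hv : hgpX (repMat w) (repMat d) *ᵥ v = 0)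
    (hvR : v ∉ LinearMap.range (hgpZ (repMat w) (repMat d)).vecMulLinear) : w ≤ wt v := by
  have h0 : leftContract 1 v ⟨0, hw⟩ ≠ 0 := fun h0 =>
    hvR (by rw [range_vecMulLinear_hgpZ_repMat hw hd]; exact ⟨hv, h0⟩)
  have hrow (i : Fin w) : ∃ a, v (.inl (i, a)) ≠ 0 := by
    have hi : leftContract 1 v i ≠ 0 := by
      rwa [apply_eq_apply_zero_of_repMat_mulVec_eq_zero
        (mulVec_leftContract_eq_zero _ _ repMat_mulVec_one hv)]
    rw [leftContract_apply] at hi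
    obtain ⟨a, -, ha⟩ := exists_ne_zero_of_sum_ne_zero hi
    exact ⟨a, right_ne_zero_of_mul ha⟩
  choose a ha using hrow
  simpa using card_le_wt_of_injective (fun i => Sum.inl (i, a i))
    (fun i j h => congrArg Prod.fst (Sum.inl_injective h)) ha

theorem sInf_logicalWeights_hgpX_repMat (hw : 0 < w) (hd : 0 < d) :
    sInf (logicalWeights (hgpX (repMat w) (repMat d)) (hgpZ (repMat w) (repMat d))) = w := by
  refine IsLeast.csInf_eq ⟨⟨leftTensor 1 (Pi.single ⟨0, hd⟩ 1),
    hgpX_mulVec_leftTensor _ _ repMat_mulVec_one _, fun hR => ?_, ?_⟩, ?_⟩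
  · rw [range_vecMulLinear_hgpZ_repMat hw hd] at hR
    simpa [leftContract_one_leftTensor_single] using hR.2
  · simp [wt_leftTensor, wt_one, wt_single]
  · rintro _ ⟨v, hv, hvR, rfl⟩
    exact le_wt_of_mulVec_hgpX_repMat_eq_zero hw hd hv hvR

theorem sInf_logicalWeights_hgpZ_repMat (hw : 0 < w) (hd : 0 < d) :
    sInf (logicalWeights (hgpZ (repMat w) (repMat d)) (hgpX (repMat w) (repMat d))) = d := by
  rw [hgpZ_eq_submatrix_hgpX, hgpX_eq_submatrix_hgpZ (repMat w) (repMat d),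
    logicalWeights_submatrix, sInf_logicalWeights_hgpX_repMat hd hw]

end SurfaceCode

/-- The hypergraph product of two repetition codes `R_w` and `R_d` (`w, d ≥ 2`) is the
`w × d` surface code with parameters `[[wd + (w−1)(d−1), 1, min(w,d)]]`: it has
`wd + (w−1)(d−1)` physical qubits, exactly one logical qubit, and CSS distance `min(w,d)`,
where `d_X = min{ wt v : H_Z v = 0, v ∉ rowspace(H_X) }` and
`d_Z = min{ wt v : H_X v = 0, v ∉ rowspace(H_Z) }`. -/
theorem surface_code_params (w d : ℕ) (hw : 2 ≤ w) (hd : 2 ≤ d) :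
    Fintype.card ((Fin w × Fin d) ⊕ (Fin (w - 1) × Fin (d - 1))) =
        w * d + (w - 1) * (d - 1) ∧
    (w * d + (w - 1) * (d - 1)) -
        (hgpX (repMat w) (repMat d)).rank - (hgpZ (repMat w) (repMat d)).rank = 1 ∧
    min
      (sInf {m : ℕ | ∃ v, (hgpZ (repMat w) (repMat d)).mulVec v = 0 ∧
        v ∉ LinearMap.range (hgpX (repMat w) (repMat d)).vecMulLinear ∧ wt v = m})
      (sInf {m : ℕ | ∃ v, (hgpX (repMat w) (repMat d)).mulVec v = 0 ∧
        v ∉ LinearMap.range (hgpZ (repMat w) (repMat d)).vecMulLinear ∧ wt v = m})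
    = min w d := by
  refine ⟨by simp, ?_, ?_⟩
  · rw [rank_hgpX_repMat, rank_hgpZ_repMat, mul_add_pred_mul_pred (by omega) (by omega)]
    omega
  · change min (sInf (logicalWeights _ _)) (sInf (logicalWeights _ _)) = _
    rw [sInf_logicalWeights_hgpZ_repMat (by omega) (by omega),
      sInf_logicalWeights_hgpX_repMat (by omega) (by omega), min_comm]
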